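/- arXiv:2103.10008 — 5 statements merged into one kernel-verified Lean document; each statement's English description precedes it below -/
import Mathlib

section
/- Let f : 2^Ω → ℝ be a submodular function, and let F and f̂ be its multilinear and Lovász extensions, respectively. Then F(x) ≥ f̂(x) for every x ∈ [0,1]^Ω. -/
/-!
Order `Ω` so that `x` is decreasing. Every threshold set `T_λ(x)` is then an initial segment,
so `f (T_λ(x))` telescopes to `f ∅ + ∑ e ∈ T_λ(x), w e` with the greedy weights
`w e = f (Iic e) - f (Iio e)`, and integrating over `λ` gives `f̂(x) = f ∅ + ∑ e, x e * w e`.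
Submodularity gives `f ∅ + ∑ e ∈ A, w e ≤ f A` for every `A`; averaging this over the product
distribution with marginals `x`, whose mean is `F(x)`, yields `F(x) ≥ f ∅ + ∑ e, x e * w e`.
-/

open Finset

section GreedyWeight

variable {α : Type*} [LinearOrder α] [LocallyFiniteOrderBot α]

lemma eq_Iio_of_isLowerSet_insert {a : α} {s : Finset α} (hs : ∀ b ∈ s, b < a)
    (hlow : IsLowerSet (insert a s : Set α)) : s = Iio a := by
  ext b
  refine ⟨fun hb => mem_Iio.2 (hs b hb), fun hb => ?_⟩
  have hb' : b ∈ (insert a s : Set α) := hlow (mem_Iio.1 hb).le (Set.mem_insert a _)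
  exact (Set.mem_insert_iff.1 hb').resolve_left (mem_Iio.1 hb).ne

variable {β : Type*} [AddCommGroup β] (f : Finset α → β)

def greedyWeight (a : α) : β := f (Iic a) - f (Iio a)

variable [DecidableEq α]

lemma eq_add_sum_greedyWeight_of_isLowerSet {D : Finset α} (hD : IsLowerSet (D : Set α)) :
    f D = f ∅ + ∑ a ∈ D, greedyWeight f a := by
  induction D using Finset.induction_on_max with
  | empty => simp
  | insert a s hs ih =>
    obtain rfl := eq_Iio_of_isLowerSet_insert hs (by simpa using hD)
    rw [sum_insert notMem_Iio_self, Iio_insert, add_left_comm,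
      ← ih (by simpa using isLowerSet_Iio a), greedyWeight, sub_add_cancel]

lemma add_sum_greedyWeight_le [PartialOrder β] [IsOrderedAddMonoid β]
    (hf : ∀ A B, f A + f B ≥ f (A ∪ B) + f (A ∩ B)) (A : Finset α) :
    f ∅ + ∑ a ∈ A, greedyWeight f a ≤ f A := by
  induction A using Finset.induction_on_max with
  | empty => simp
  | insert a s hs ih =>
    have hsub : s ⊆ Iio a := fun b hb => mem_Iio.2 (hs b hb)
    have hunion : insert a s ∪ Iio a = Iic a := by
      rw [insert_union, union_eq_right.2 hsub, Iio_insert]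
    have hinter : insert a s ∩ Iio a = s := by
      rw [insert_inter_of_notMem notMem_Iio_self, inter_eq_left.2 hsub]
    have hmarginal := hf (insert a s) (Iio a)
    rw [hunion, hinter] at hmarginal
    calc f ∅ + ∑ b ∈ insert a s, greedyWeight f b
        = greedyWeight f a + (f ∅ + ∑ b ∈ s, greedyWeight f b) := by
          rw [sum_insert fun h => (hs a h).false]; abel
      _ ≤ f (Iic a) - f (Iio a) + f s := by rw [greedyWeight]; gcongr
      _ ≤ f (insert a s) := by rwa [sub_add_eq_add_sub, sub_le_iff_le_add]

end GreedyWeight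

lemma exists_linearOrder_antitone {α β : Type*} [LinearOrder β] (x : α → β) :
    ∃ _ : LinearOrder α, Antitone x := by
  let _ := WellOrderingRel.isWellOrder.linearOrder (α := α)
  let key : α → βᵒᵈ ×ₗ α := fun a => toLex (OrderDual.toDual (x a), a)
  exact ⟨LinearOrder.lift' key fun a b h => congrArg (·.2) h,
    fun a b hab => Prod.Lex.monotone_fst (key a) (key b) hab⟩

section ProductWeight

variable {α : Type*} [Fintype α] [DecidableEq α]

def productWeight (x : α → ℝ) (S : Finset α) : ℝ := (∏ e ∈ S, x e) * ∏ e ∈ Sᶜ, (1 - x e)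

lemma productWeight_nonneg {x : α → ℝ} (hx : ∀ e, x e ∈ Set.Icc (0 : ℝ) 1) (S : Finset α) :
    0 ≤ productWeight x S :=
  mul_nonneg (prod_nonneg fun e _ => (hx e).1) (prod_nonneg fun e _ => sub_nonneg.2 (hx e).2)

lemma sum_productWeight (x : α → ℝ) : ∑ S, productWeight x S = 1 := by
  simpa [productWeight] using (Fintype.prod_add x (1 - x)).symm

lemma sum_filter_mem_productWeight (x : α → ℝ) (o : α) :
    ∑ S with o ∈ S, productWeight x S = x o := by
  -- Zeroing the factor of `o` in the complement kills exactly the sets that miss `o`.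
  have hkill (S : Finset α) : (if o ∈ S then productWeight x S else 0) =
      (∏ e ∈ S, x e) * ∏ e ∈ Sᶜ, (if e = o then 0 else 1 - x e) := by
    split_ifs with ho
    · refine congrArg _ (prod_congr rfl fun e he => ?_)
      rw [if_neg (by rintro rfl; exact mem_compl.1 he ho)]
    · rw [prod_eq_zero (mem_compl.2 ho) (by simp), mul_zero]
  rw [sum_filter, Fintype.sum_congr _ _ hkill, ← Fintype.prod_add]
  simp [add_ite]

lemma sum_productWeight_mul_add_sum (x : α → ℝ) (c : ℝ) (w : α → ℝ) :
    ∑ S, productWeight x S * (c + ∑ a ∈ S, w a) = c + ∑ a, x a * w a := by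
  simp only [mul_add, sum_add_distrib, ← sum_mul, sum_productWeight, one_mul, mul_sum]
  rw [sum_comm' (t' := univ) (s' := fun a => {S | a ∈ S}) (h := by simp)]
  simp_rw [← sum_mul, sum_filter_mem_productWeight]

end ProductWeight

lemma intervalIntegral_add_sum_filter_le {α : Type*} [Fintype α] (c : ℝ) (w x : α → ℝ)
    (hx : ∀ e, x e ∈ Set.Icc (0 : ℝ) 1) :
    ∫ t in (0 : ℝ)..1, (c + ∑ a with t ≤ x a, w a) = c + ∑ a, x a * w a := by
  have hindicator (t : ℝ) :
      ∑ a with t ≤ x a, w a = (∑ a, {s | s ≤ x a}.indicator fun _ => w a) t := by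
    simp [sum_filter, Set.indicator]
  have hintegrable (a : α) :
      IntervalIntegrable ({s | s ≤ x a}.indicator fun _ => w a) MeasureTheory.volume 0 1 :=
    intervalIntegrable_iff.2 ((intervalIntegrable_iff.1 intervalIntegrable_const).indicator
      measurableSet_Iic)
  simp_rw [hindicator]
  rw [intervalIntegral.integral_add intervalIntegrable_const
      (IntervalIntegrable.sum _ fun a _ => hintegrable a)]
  simp only [Finset.sum_apply]
  rw [intervalIntegral.integral_finsetSum fun a _ => hintegrable a]
  simp [intervalIntegral.integral_indicator (hx _)]

/-- the multilinear extension dominates the Lovász extension of a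
submodular function on `[0,1]^Ω`. -/
theorem stmt_4 {Ω : Type*} [Fintype Ω] [DecidableEq Ω] (f : Finset Ω → ℝ)
    (hsub : ∀ A B : Finset Ω, f A + f B ≥ f (A ∪ B) + f (A ∩ B))
    (x : Ω → ℝ) (hx : ∀ e, x e ∈ Set.Icc (0:ℝ) 1) :
    (∑ S : Finset Ω, f S * ((∏ e ∈ S, x e) * ∏ e ∈ Sᶜ, (1 - x e)))
      ≥ ∫ lam in (0:ℝ)..1, f (Finset.univ.filter (fun e => lam ≤ x e)) := by
  obtain ⟨_, hanti⟩ := exists_linearOrder_antitone x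
  let _ := LocallyFiniteOrderBot.ofIic Ω (fun a => {b | b ≤ a}) (by simp)
  have hlower (t : ℝ) : IsLowerSet ((univ.filter fun e => t ≤ x e : Finset Ω) : Set Ω) := by
    simpa using isLowerSet_setOfPred.2 fun a b hab h => h.trans (hanti hab)
  calc ∫ t in (0:ℝ)..1, f (univ.filter fun e => t ≤ x e)
      = ∫ t in (0:ℝ)..1, (f ∅ + ∑ a with t ≤ x a, greedyWeight f a) :=
        intervalIntegral.integral_congr fun t _ =>
          eq_add_sum_greedyWeight_of_isLowerSet f (hlower t)
    _ = ∑ S, productWeight x S * (f ∅ + ∑ a ∈ S, greedyWeight f a) := by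
        rw [intervalIntegral_add_sum_filter_le _ _ _ hx, sum_productWeight_mul_add_sum]
    _ ≤ ∑ S, f S * productWeight x S := sum_le_sum fun S _ => by
        rw [mul_comm]
        exact mul_le_mul_of_nonneg_right (add_sum_greedyWeight_le f hsub S)
          (productWeight_nonneg hx S)
end

section
/- Let g : 2^Ω → ℝ₊ be a nonnegative submodular function, let OPT ⊆ Ω, and let ĝ be the Lovász extension of g. Then for every vector y ∈ [0,1]^Ω with y_e ≤ 1 − c for all e ∈ Ω (where c ∈ [0,1]), it holds that ĝ(y ∨ 1_{OPT}) ≥ c · g(OPT), where (y ∨ 1_{OPT})_e = max(y_e, [e ∈ OPT]). -/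
/-!
For `λ ∈ (1 - c, 1]` every coordinate of `y` lies below `λ` while those of `1_OPT` on `OPT`
reach it, so `T_λ(y ∨ 1_OPT) = OPT`. Splitting `∫₀¹` at `1 - c`, this part contributes exactly
`c · g(OPT)` and the rest is nonnegative since `g ≥ 0`.
-/

open MeasureTheory Finset

namespace Lovasz

variable {Ω : Type*} [Fintype Ω]

-- `T_λ(t)` in the Lovász extension `ĝ(t) = ∫₀¹ g (T_λ(t)) dλ`.
noncomputable def levelSet (t : Ω → ℝ) (lam : ℝ) : Finset Ω :=
  univ.filter fun e => lam ≤ t e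

theorem measurableSet_levelSet_eq (t : Ω → ℝ) (S : Finset Ω) :
    MeasurableSet {lam | levelSet t lam = S} := by
  have : {lam | levelSet t lam = S} = ⋂ e, {lam | lam ≤ t e ↔ e ∈ S} := by
    ext lam
    simp [levelSet, Finset.ext_iff]
  rw [this]
  refine .iInter fun e => ?_
  by_cases he : e ∈ S
  · simp only [he, iff_true]
    exact measurableSet_Iic
  · simp only [he, iff_false]
    exact measurableSet_Iic.compl

theorem intervalIntegrable_comp_levelSet (g : Finset Ω → ℝ) (t : Ω → ℝ) (a b : ℝ) :
    IntervalIntegrable (fun lam => g (levelSet t lam)) volume a b := by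
  classical
  let _ : MeasurableSpace (Finset Ω) := ⊤
  have hmeas : Measurable fun lam => g (levelSet t lam) :=
    measurable_from_top.comp (measurable_to_countable' (measurableSet_levelSet_eq t))
  rw [intervalIntegrable_iff]
  refine .of_bound measure_Ioc_lt_top hmeas.aestronglyMeasurable (∑ S, ‖g S‖) (.of_forall ?_)
  exact fun lam => single_le_sum (f := fun S => ‖g S‖) (fun _ _ => norm_nonneg _) (mem_univ _)

theorem levelSet_max_indicator [DecidableEq Ω] (y : Ω → ℝ) (OPT : Finset Ω) {lam : ℝ}
    (hpos : 0 < lam) (hle : lam ≤ 1) (hy : ∀ e, y e < lam) :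
    levelSet (fun e => max (y e) (if e ∈ OPT then 1 else 0)) lam = OPT := by
  ext e
  by_cases he : e ∈ OPT <;> simp [levelSet, he, hle, (hy e).not_ge, hpos.not_ge]

end Lovasz

open Lovasz

theorem stmt_5_general {Ω : Type*} [Fintype Ω] [DecidableEq Ω] (g : Finset Ω → ℝ)
    (hg : ∀ A : Finset Ω, 0 ≤ g A)
    (OPT : Finset Ω) (c : ℝ) (hc : c ∈ Set.Icc (0:ℝ) 1)
    (y : Ω → ℝ) (hyc : ∀ e, y e ≤ 1 - c) :
    (∫ lam in (0:ℝ)..1,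
        g (Finset.univ.filter
            (fun e => lam ≤ max (y e) (if e ∈ OPT then (1:ℝ) else 0))))
      ≥ c * g OPT := by
  set t : Ω → ℝ := fun e => max (y e) (if e ∈ OPT then 1 else 0)
  have hint := intervalIntegrable_comp_levelSet g t
  have hc₁ : 1 - c ≤ 1 := by linarith [hc.1]
  have hlow : 0 ≤ ∫ lam in (0:ℝ)..(1 - c), g (levelSet t lam) :=
    intervalIntegral.integral_nonneg (by linarith [hc.2]) fun _ _ => hg _
  have hhigh : ∫ lam in (1 - c)..1, g (levelSet t lam) = c * g OPT := by
    have hOPT : Set.EqOn (fun lam => g (levelSet t lam)) (fun _ => g OPT) (Set.Ioc (1 - c) 1) :=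
      fun lam hlam => congrArg g <| levelSet_max_indicator y OPT (by linarith [hlam.1, hc.2])
        hlam.2 fun e => (hyc e).trans_lt hlam.1
    rw [intervalIntegral.integral_of_le hc₁, setIntegral_congr_fun measurableSet_Ioc hOPT,
      setIntegral_const, Real.volume_real_Ioc_of_le hc₁, smul_eq_mul, sub_sub_cancel]
  change c * g OPT ≤ ∫ lam in (0:ℝ)..1, g (levelSet t lam)
  rw [← intervalIntegral.integral_add_adjacent_intervals (hint 0 (1 - c)) (hint (1 - c) 1)]
  linarith

/-- `ĝ(y ∨ 1_OPT) ≥ c · g(OPT)` when all coordinates of `y` are at most `1 - c`. -/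
theorem stmt_5 {Ω : Type*} [Fintype Ω] [DecidableEq Ω] (g : Finset Ω → ℝ)
    (hg : ∀ A : Finset Ω, 0 ≤ g A)
    (hsub : ∀ A B : Finset Ω, g A + g B ≥ g (A ∪ B) + g (A ∩ B))
    (OPT : Finset Ω) (c : ℝ) (hc : c ∈ Set.Icc (0:ℝ) 1)
    (y : Ω → ℝ) (hy : ∀ e, y e ∈ Set.Icc (0:ℝ) 1) (hyc : ∀ e, y e ≤ 1 - c) :
    (∫ lam in (0:ℝ)..1,
        g (Finset.univ.filter
            (fun e => lam ≤ max (y e) (if e ∈ OPT then (1:ℝ) else 0))))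
      ≥ c * g OPT :=
  stmt_5_general g hg OPT c hc y hyc
end

section
/- Let f : 2^Ω → ℝ₊ be a nonnegative submodular function on a ground set of size n, with multilinear extension F, and let M = max( max_{e∈Ω} f(e|∅), −min_{e∈Ω} f(e|Ω−e) ) > 0. Then for any two vectors y, y' ∈ [0,1]^Ω with |y'_e − y_e| ≤ δ ≤ 1 for all e, one has |F(y') − F(y) − ⟨∇F(y), y' − y⟩| ≤ n²δ²M. -/
/-- Partial derivative of a function on `ℝ^Ω` with respect to coordinate `e`. -/
noncomputable def partialDeriv8 {Ω : Type*} [DecidableEq Ω]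
    (F : (Ω → ℝ) → ℝ) (e : Ω) (x : Ω → ℝ) : ℝ :=
  deriv (fun t : ℝ => F (Function.update x e t)) (x e)

open Finset Function

section Aux

variable {Ω : Type*} [DecidableEq Ω]

/-- multilinear polynomial with coefficients `h` over ground set `E`. -/
noncomputable def Gm8 (E : Finset Ω) (h : Finset Ω → ℝ) (x : Ω → ℝ) : ℝ :=
  ∑ S ∈ E.powerset, h S * ((∏ a ∈ S, x a) * ∏ a ∈ E \ S, (1 - x a))

lemma Gm8_update (E : Finset Ω) (h : Finset Ω → ℝ) {e : Ω} (he : e ∈ E) (x : Ω → ℝ) (t : ℝ) :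
    Gm8 E h (Function.update x e t)
      = t * Gm8 (E.erase e) (fun S => h (insert e S)) x + (1 - t) * Gm8 (E.erase e) h x := by
  classical
  have hnot : e ∉ E.erase e := notMem_erase e E
  have e1 : ∀ S ∈ (E.erase e).powerset,
      h S * ((∏ a ∈ S, Function.update x e t a)
          * ∏ a ∈ insert e (E.erase e) \ S, (1 - Function.update x e t a))
      = (1 - t) * (h S * ((∏ a ∈ S, x a) * ∏ a ∈ E.erase e \ S, (1 - x a))) := by
    intro S hS
    rw [mem_powerset] at hS
    have heS : e ∉ S := fun h' => hnot (hS h')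
    have h1 : ∏ a ∈ S, Function.update x e t a = ∏ a ∈ S, x a :=
      prod_congr rfl fun a ha => Function.update_of_ne (ne_of_mem_of_not_mem ha heS) _ _
    have h3 : e ∉ E.erase e \ S := fun h' => hnot (mem_sdiff.mp h').1
    have h2 : insert e (E.erase e) \ S = insert e (E.erase e \ S) := by
      ext b
      by_cases hb : b = e
      · subst hb; simp [heS]
      · simp [hb]
    have h4 : ∏ a ∈ E.erase e \ S, (1 - Function.update x e t a)
        = ∏ a ∈ E.erase e \ S, (1 - x a) :=
      prod_congr rfl fun a ha => by
        rw [Function.update_of_ne (ne_of_mem_of_not_mem ha h3)]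
    rw [h1, h2, prod_insert h3, Function.update_self, h4]
    ring
  have e2 : ∀ S ∈ (E.erase e).powerset,
      h (insert e S) * ((∏ a ∈ insert e S, Function.update x e t a)
          * ∏ a ∈ insert e (E.erase e) \ insert e S, (1 - Function.update x e t a))
      = t * (h (insert e S) * ((∏ a ∈ S, x a) * ∏ a ∈ E.erase e \ S, (1 - x a))) := by
    intro S hS
    rw [mem_powerset] at hS
    have heS : e ∉ S := fun h' => hnot (hS h')
    have h1 : ∏ a ∈ S, Function.update x e t a = ∏ a ∈ S, x a :=
      prod_congr rfl fun a ha => Function.update_of_ne (ne_of_mem_of_not_mem ha heS) _ _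
    have h3 : e ∉ E.erase e \ S := fun h' => hnot (mem_sdiff.mp h').1
    have h2 : insert e (E.erase e) \ insert e S = E.erase e \ S := by
      ext b
      by_cases hb : b = e
      · subst hb; simp [hnot]
      · simp [hb]
    have h4 : ∏ a ∈ E.erase e \ S, (1 - Function.update x e t a)
        = ∏ a ∈ E.erase e \ S, (1 - x a) :=
      prod_congr rfl fun a ha => by
        rw [Function.update_of_ne (ne_of_mem_of_not_mem ha h3)]
    rw [prod_insert heS, Function.update_self, h1, h2, h4]
    ring
  conv_lhs => rw [Gm8, ← insert_erase he, sum_powerset_insert hnot]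
  rw [sum_congr rfl e1, sum_congr rfl e2, ← Finset.mul_sum, ← Finset.mul_sum, Gm8, Gm8]
  ring

lemma Gm8_sub (E : Finset Ω) (h1 h2 : Finset Ω → ℝ) (x : Ω → ℝ) :
    Gm8 E (fun S => h1 S - h2 S) x = Gm8 E h1 x - Gm8 E h2 x := by
  rw [Gm8, Gm8, Gm8, ← Finset.sum_sub_distrib]
  exact sum_congr rfl fun S _ => by ring

lemma Gm8_congr (E : Finset Ω) (h : Finset Ω → ℝ) (x x' : Ω → ℝ)
    (hxx : ∀ a ∈ E, x a = x' a) :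
    Gm8 E h x = Gm8 E h x' := by
  refine sum_congr rfl fun S hS => ?_
  rw [mem_powerset] at hS
  have h1 : ∏ a ∈ S, x a = ∏ a ∈ S, x' a :=
    prod_congr rfl fun a ha => hxx a (hS ha)
  have h2 : ∏ a ∈ E \ S, (1 - x a) = ∏ a ∈ E \ S, (1 - x' a) :=
    prod_congr rfl fun a ha => by rw [hxx a (mem_sdiff.mp ha).1]
  rw [h1, h2]

lemma Gm8_abs_le (E : Finset Ω) (h : Finset Ω → ℝ) (x : Ω → ℝ)
    (hx : ∀ a ∈ E, x a ∈ Set.Icc (0:ℝ) 1) (c : ℝ)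
    (hc : ∀ S ⊆ E, |h S| ≤ c) : |Gm8 E h x| ≤ c := by
  have hw : ∀ S ∈ E.powerset, 0 ≤ (∏ a ∈ S, x a) * ∏ a ∈ E \ S, (1 - x a) := by
    intro S hS
    rw [mem_powerset] at hS
    refine mul_nonneg (prod_nonneg fun a ha => (hx a (hS ha)).1)
      (prod_nonneg fun a ha => ?_)
    have := (hx a (mem_sdiff.mp ha).1).2
    linarith
  have hsum : ∑ S ∈ E.powerset, (∏ a ∈ S, x a) * ∏ a ∈ E \ S, (1 - x a) = 1 := by
    rw [← Finset.prod_add (fun a => x a) (fun a => 1 - x a) E]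
    simp
  calc |Gm8 E h x| ≤ ∑ S ∈ E.powerset, |h S * ((∏ a ∈ S, x a) * ∏ a ∈ E \ S, (1 - x a))| :=
        Finset.abs_sum_le_sum_abs _ _
    _ ≤ ∑ S ∈ E.powerset, c * ((∏ a ∈ S, x a) * ∏ a ∈ E \ S, (1 - x a)) := by
        refine sum_le_sum fun S hS => ?_
        rw [abs_mul, abs_of_nonneg (hw S hS)]
        exact mul_le_mul_of_nonneg_right (hc S (mem_powerset.mp hS)) (hw S hS)
    _ = c := by rw [← Finset.mul_sum, hsum, mul_one]

variable [Fintype Ω]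

/-- discrete derivative of the multilinear extension of `f` in direction `e`. -/
noncomputable def D8 (f : Finset Ω → ℝ) (e : Ω) (x : Ω → ℝ) : ℝ :=
  Gm8 (univ.erase e) (fun S => f (insert e S) - f S) x

lemma D8_eq (f : Finset Ω → ℝ) (e : Ω) (x : Ω → ℝ) :
    D8 f e x = Gm8 (univ.erase e) (fun S => f (insert e S)) x - Gm8 (univ.erase e) f x := by
  rw [D8, ← Gm8_sub]

lemma D8_affine (f : Finset Ω → ℝ) (x : Ω → ℝ) (e : Ω) (t : ℝ) :
    Gm8 univ f (Function.update x e t) = Gm8 univ f (Function.update x e 0) + t * D8 f e x := by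
  rw [Gm8_update univ f (mem_univ e) x t, Gm8_update univ f (mem_univ e) x 0, D8_eq]
  ring

lemma D8_const_e (f : Finset Ω → ℝ) (e : Ω) (x : Ω → ℝ) (t : ℝ) :
    D8 f e (Function.update x e t) = D8 f e x := by
  rw [D8, D8]
  refine Gm8_congr _ _ _ _ fun a ha => ?_
  exact Function.update_of_ne (ne_of_mem_erase ha) _ _

lemma D8_affine2 (f : Finset Ω → ℝ) {e a : Ω} (hae : a ≠ e) (x : Ω → ℝ) (t : ℝ) :
    D8 f e (Function.update x a t)
      = D8 f e (Function.update x a 0)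
        + t * Gm8 ((univ.erase e).erase a)
            (fun S => (f (insert e (insert a S)) - f (insert a S))
                      - (f (insert e S) - f S)) x := by
  have ha : a ∈ univ.erase e := mem_erase.mpr ⟨hae, mem_univ a⟩
  have key : Gm8 ((univ.erase e).erase a)
      (fun S => (f (insert e (insert a S)) - f (insert a S)) - (f (insert e S) - f S)) x
      = Gm8 ((univ.erase e).erase a) (fun S => f (insert e (insert a S)) - f (insert a S)) x
        - Gm8 ((univ.erase e).erase a) (fun S => f (insert e S) - f S) x := by
    rw [Gm8, Gm8, Gm8, ← Finset.sum_sub_distrib]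
    exact sum_congr rfl fun S _ => by ring
  rw [D8, D8, Gm8_update _ _ ha x t, Gm8_update _ _ ha x 0, key]
  ring

end Aux

/-- first-order Taylor bound for the multilinear extension. -/
theorem stmt_8 {Ω : Type*} [Fintype Ω] [DecidableEq Ω] [Nonempty Ω]
    (f : Finset Ω → ℝ) (hf : ∀ A, 0 ≤ f A)
    (hsub : ∀ A B : Finset Ω, f A + f B ≥ f (A ∪ B) + f (A ∩ B))
    (F : (Ω → ℝ) → ℝ)
    (hF : ∀ x : Ω → ℝ,
      F x = ∑ S : Finset Ω, f S * ((∏ e ∈ S, x e) * ∏ e ∈ Sᶜ, (1 - x e)))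
    (M : ℝ)
    (hM : M = max
      (Finset.univ.sup' Finset.univ_nonempty (fun e => f {e} - f ∅))
      (Finset.univ.sup' Finset.univ_nonempty
        (fun e => f (Finset.univ \ {e}) - f Finset.univ)))
    (hMpos : 0 < M)
    (δ : ℝ) (hδ : δ ≤ 1)
    (y y' : Ω → ℝ) (hy : ∀ e, y e ∈ Set.Icc (0:ℝ) 1) (hy' : ∀ e, y' e ∈ Set.Icc (0:ℝ) 1)
    (hclose : ∀ e, |y' e - y e| ≤ δ) :
    |F y' - F y - ∑ e : Ω, partialDeriv8 F e y * (y' e - y e)|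
      ≤ (Fintype.card Ω : ℝ) ^ 2 * δ ^ 2 * M := by
  classical
  have hδ0 : 0 ≤ δ := le_trans (abs_nonneg _) (hclose (Classical.arbitrary Ω))
  have hM0 : 0 ≤ M := le_of_lt hMpos
  -- bounds on marginals
  have hM1 : ∀ b : Ω, f {b} - f ∅ ≤ M := by
    intro b
    rw [hM]
    exact le_trans (Finset.le_sup' (fun e => f {e} - f ∅) (mem_univ b)) (le_max_left _ _)
  have hM2 : ∀ b : Ω, f (Finset.univ \ {b}) - f Finset.univ ≤ M := by
    intro b
    rw [hM]
    exact le_trans (Finset.le_sup' (fun e => f (Finset.univ \ {e}) - f Finset.univ) (mem_univ b))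
      (le_max_right _ _)
  have marg_le : ∀ (b : Ω) (S : Finset Ω), b ∉ S → f (insert b S) - f S ≤ M := by
    intro b S hb
    have h := hsub {b} S
    rw [Finset.singleton_inter_of_notMem hb, ← Finset.insert_eq] at h
    have := hM1 b
    linarith
  have marg_ge : ∀ (b : Ω) (S : Finset Ω), b ∉ S → -M ≤ f (insert b S) - f S := by
    intro b S hb
    have h := hsub (insert b S) (Finset.univ \ {b})
    have hu : insert b S ∪ (Finset.univ \ {b}) = Finset.univ := by
      ext c; simp only [mem_union, mem_insert, mem_sdiff, mem_univ, mem_singleton, true_and]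
      by_cases hc : c = b <;> simp [hc]
    have hi : insert b S ∩ (Finset.univ \ {b}) = S := by
      ext c; simp only [mem_inter, mem_insert, mem_sdiff, mem_univ, mem_singleton, true_and]
      constructor
      · rintro ⟨hc1 | hc1, hc2⟩
        · exact absurd hc1 hc2
        · exact hc1
      · intro hc; exact ⟨Or.inr hc, fun h' => hb (h' ▸ hc)⟩
    rw [hu, hi] at h
    have := hM2 b
    linarith
  have submod2 : ∀ (e a : Ω) (S : Finset Ω), e ≠ a → e ∉ S → a ∉ S →
      f (insert e (insert a S)) - f (insert a S) ≤ f (insert e S) - f S := by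
    intro e a S hea heS haS
    have h := hsub (insert e S) (insert a S)
    have hu : insert e S ∪ insert a S = insert e (insert a S) := by
      ext c; simp only [mem_union, mem_insert]; tauto
    have hi : insert e S ∩ insert a S = S := by
      ext c; simp only [mem_inter, mem_insert]
      constructor
      · rintro ⟨hc1 | hc1, hc2 | hc2⟩
        · exact absurd (hc1.symm.trans hc2) hea
        · exact absurd hc1 (fun h' => heS (h' ▸ hc2))
        · exact hc1
        · exact hc1
      · intro hc; exact ⟨Or.inr hc, Or.inr hc⟩
    rw [hu, hi] at h
    linarith
  -- second difference coefficient bound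
  have coeff_bound : ∀ (e a : Ω), a ≠ e → ∀ S ⊆ (Finset.univ.erase e).erase a,
      |(f (insert e (insert a S)) - f (insert a S)) - (f (insert e S) - f S)| ≤ 2 * M := by
    intro e a hae S hS
    have heS : e ∉ S := fun h' => (mem_erase.mp (mem_erase.mp (hS h')).2).1 rfl
    have haS : a ∉ S := fun h' => (mem_erase.mp (hS h')).1 rfl
    have heaS : e ∉ insert a S := by
      simp only [mem_insert]
      rintro (h' | h')
      · exact hae h'.symm
      · exact heS h'
    have h1 : f (insert e (insert a S)) - f (insert a S) ≤ f (insert e S) - f S :=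
      submod2 e a S (fun h' => hae h'.symm) heS haS
    have h2 : -M ≤ f (insert e (insert a S)) - f (insert a S) := marg_ge e (insert a S) heaS
    have h3 : f (insert e S) - f S ≤ M := marg_le e S heS
    rw [abs_le]
    constructor <;> linarith
  -- F agrees with Gm8 univ f
  have hFG : ∀ x : Ω → ℝ, F x = Gm8 Finset.univ f x := by
    intro x
    rw [hF x, Gm8, Finset.powerset_univ]
    exact Finset.sum_congr rfl fun S _ => by rw [Finset.compl_eq_univ_sdiff]
  -- affinity of F in each coordinate
  have haff : ∀ (x : Ω → ℝ) (e : Ω) (t : ℝ),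
      F (Function.update x e t) = F (Function.update x e 0) + t * D8 f e x := by
    intro x e t
    rw [hFG, hFG]
    exact D8_affine f x e t
  -- bound on change of D8 under one coordinate change
  have hQ : ∀ (e a : Ω), a ≠ e → ∀ x : Ω → ℝ, (∀ b, x b ∈ Set.Icc (0:ℝ) 1) →
      ∀ t s : ℝ, |D8 f e (Function.update x a t) - D8 f e (Function.update x a s)|
        ≤ |t - s| * (2 * M) := by
    intro e a hae x hx t s
    rw [D8_affine2 f hae x t, D8_affine2 f hae x s]
    have hGb : |Gm8 ((Finset.univ.erase e).erase a)
        (fun S => (f (insert e (insert a S)) - f (insert a S)) - (f (insert e S) - f S)) x|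
        ≤ 2 * M :=
      Gm8_abs_le _ _ _ (fun b _ => hx b) (2 * M) (coeff_bound e a hae)
    have : D8 f e (Function.update x a 0)
        + t * Gm8 ((Finset.univ.erase e).erase a)
            (fun S => (f (insert e (insert a S)) - f (insert a S)) - (f (insert e S) - f S)) x
        - (D8 f e (Function.update x a 0)
        + s * Gm8 ((Finset.univ.erase e).erase a)
            (fun S => (f (insert e (insert a S)) - f (insert a S)) - (f (insert e S) - f S)) x)
        = (t - s) * Gm8 ((Finset.univ.erase e).erase a)
            (fun S => (f (insert e (insert a S)) - f (insert a S)) - (f (insert e S) - f S)) x := by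
      ring
    rw [this, abs_mul]
    exact mul_le_mul_of_nonneg_left hGb (abs_nonneg _)
  -- intermediate points stay in the cube
  have hcube : ∀ K : Finset Ω, ∀ b, (K.piecewise y' y) b ∈ Set.Icc (0:ℝ) 1 := by
    intro K b
    by_cases hb : b ∈ K <;> simp [Finset.piecewise, hb, hy b, hy' b]
  -- Lipschitz bound for D8 along the path
  have hLip : ∀ (K : Finset Ω) (e : Ω),
      |D8 f e (K.piecewise y' y) - D8 f e y| ≤ (K.card : ℝ) * (2 * M * δ) := by
    intro K
    induction K using Finset.induction_on with
    | empty => intro e; simp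
    | @insert a K ha ih =>
      intro e
      have hz : (insert a K).piecewise y' y = Function.update (K.piecewise y' y) a (y' a) :=
        Finset.piecewise_insert _ _ _ _
      have hza : (K.piecewise y' y) a = y a := Finset.piecewise_eq_of_notMem _ _ _ ha
      have hcard : ((insert a K).card : ℝ) = (K.card : ℝ) + 1 := by
        rw [Finset.card_insert_of_notMem ha]; push_cast; ring
      by_cases hae : a = e
      · subst hae
        have : D8 f a ((insert a K).piecewise y' y) = D8 f a (K.piecewise y' y) := by
          rw [hz]; exact D8_const_e f a _ _
        rw [this]
        calc |D8 f a (K.piecewise y' y) - D8 f a y| ≤ (K.card : ℝ) * (2 * M * δ) := ih a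
          _ ≤ ((insert a K).card : ℝ) * (2 * M * δ) := by
            rw [hcard]
            have : (0:ℝ) ≤ 2 * M * δ := by positivity
            nlinarith
      · have step : |D8 f e ((insert a K).piecewise y' y) - D8 f e (K.piecewise y' y)|
            ≤ δ * (2 * M) := by
          have h1 : D8 f e (K.piecewise y' y)
              = D8 f e (Function.update (K.piecewise y' y) a (y a)) := by
            rw [← hza, Function.update_eq_self]
          rw [hz, h1]
          calc |D8 f e (Function.update (K.piecewise y' y) a (y' a))
                - D8 f e (Function.update (K.piecewise y' y) a (y a))|
              ≤ |y' a - y a| * (2 * M) := hQ e a hae _ (hcube K) _ _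
            _ ≤ δ * (2 * M) := by
                have : (0:ℝ) ≤ 2 * M := by linarith
                exact mul_le_mul_of_nonneg_right (hclose a) this
        calc |D8 f e ((insert a K).piecewise y' y) - D8 f e y|
            ≤ |D8 f e ((insert a K).piecewise y' y) - D8 f e (K.piecewise y' y)|
              + |D8 f e (K.piecewise y' y) - D8 f e y| := abs_sub_le _ _ _
          _ ≤ δ * (2 * M) + (K.card : ℝ) * (2 * M * δ) := add_le_add step (ih e)
          _ = ((insert a K).card : ℝ) * (2 * M * δ) := by rw [hcard]; ring
  -- main induction
  have hMain : ∀ K : Finset Ω,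
      |F (K.piecewise y' y) - F y - ∑ e ∈ K, D8 f e y * (y' e - y e)|
        ≤ (K.card : ℝ) ^ 2 * δ ^ 2 * M := by
    intro K
    induction K using Finset.induction_on with
    | empty => simp
    | @insert a K ha ih =>
      have hz : (insert a K).piecewise y' y = Function.update (K.piecewise y' y) a (y' a) :=
        Finset.piecewise_insert _ _ _ _
      have hza : (K.piecewise y' y) a = y a := Finset.piecewise_eq_of_notMem _ _ _ ha
      have hstep : F ((insert a K).piecewise y' y) - F (K.piecewise y' y)
          = (y' a - y a) * D8 f a (K.piecewise y' y) := by
        have h0 : F (K.piecewise y' y)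
            = F (Function.update (K.piecewise y' y) a 0) + y a * D8 f a (K.piecewise y' y) := by
          conv_lhs => rw [← Function.update_eq_self a (K.piecewise y' y), hza]
          exact haff _ a (y a)
        rw [hz, haff _ a (y' a), h0]
        ring
      have hsum : ∑ e ∈ insert a K, D8 f e y * (y' e - y e)
          = D8 f a y * (y' a - y a) + ∑ e ∈ K, D8 f e y * (y' e - y e) :=
        Finset.sum_insert ha
      have key : F ((insert a K).piecewise y' y) - F y
            - ∑ e ∈ insert a K, D8 f e y * (y' e - y e)
          = (F (K.piecewise y' y) - F y - ∑ e ∈ K, D8 f e y * (y' e - y e))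
            + (y' a - y a) * (D8 f a (K.piecewise y' y) - D8 f a y) := by
        rw [hsum]
        linear_combination hstep
      rw [key]
      have hb1 : |(y' a - y a) * (D8 f a (K.piecewise y' y) - D8 f a y)|
          ≤ δ * ((K.card : ℝ) * (2 * M * δ)) := by
        rw [abs_mul]
        refine mul_le_mul (hclose a) (hLip K a) (abs_nonneg _) hδ0
      have hcard : ((insert a K).card : ℝ) = (K.card : ℝ) + 1 := by
        rw [Finset.card_insert_of_notMem ha]; push_cast; ring
      calc |(F (K.piecewise y' y) - F y - ∑ e ∈ K, D8 f e y * (y' e - y e))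
            + (y' a - y a) * (D8 f a (K.piecewise y' y) - D8 f a y)|
          ≤ |F (K.piecewise y' y) - F y - ∑ e ∈ K, D8 f e y * (y' e - y e)|
            + |(y' a - y a) * (D8 f a (K.piecewise y' y) - D8 f a y)| := abs_add_le _ _
        _ ≤ (K.card : ℝ) ^ 2 * δ ^ 2 * M + δ * ((K.card : ℝ) * (2 * M * δ)) :=
            add_le_add ih hb1
        _ ≤ ((insert a K).card : ℝ) ^ 2 * δ ^ 2 * M := by
            rw [hcard]
            have h1 : (0:ℝ) ≤ (K.card : ℝ) := Nat.cast_nonneg _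
            nlinarith [sq_nonneg δ, mul_nonneg (sq_nonneg δ) hM0]
  -- identify partialDeriv8 with D8
  have hPD : ∀ e : Ω, partialDeriv8 F e y = D8 f e y := by
    intro e
    unfold partialDeriv8
    have hfun : (fun t : ℝ => F (Function.update y e t))
        = fun t : ℝ => F (Function.update y e 0) + t * D8 f e y :=
      funext fun t => haff y e t
    rw [hfun]
    have h := ((hasDerivAt_id (y e)).mul_const (D8 f e y)).const_add
      (F (Function.update y e 0))
    simpa using h.deriv
  have hfinal := hMain Finset.univ
  rw [Finset.piecewise_univ] at hfinal
  have hc : ((Finset.univ : Finset Ω).card : ℝ) = (Fintype.card Ω : ℝ) := by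
    rw [Finset.card_univ]
  rw [hc] at hfinal
  have hsum2 : ∑ e : Ω, partialDeriv8 F e y * (y' e - y e)
      = ∑ e : Ω, D8 f e y * (y' e - y e) :=
    Finset.sum_congr rfl fun e _ => by rw [hPD e]
  rw [hsum2]
  exact hfinal
end

section
/- Fix integers n ≥ 1 and 0 ≤ i ≤ n−1, a submodular function g : 2^Ω → ℝ₊, a modular function ℓ(A) = Σ_{e∈A} ℓ_e with ℓ_e ≥ 0, and a set S_i ⊆ Ω. Define Φ_j(T) = (1 − 1/n)^{n−j} g(T) − ℓ(T) and Ψ_i(T,e) = max(0, (1 − 1/n)^{n−(i+1)} g(e|T) − ℓ_e). Let e_i ∈ Ω and define S_{i+1} = S_i ∪ {e_i} if (1 − 1/n)^{n−(i+1)} g(e_i|S_i) − ℓ_{e_i} > 0, and S_{i+1} = S_i otherwise. Then Φ_{i+1}(S_{i+1}) − Φ_i(S_i) = Ψ_i(S_i, e_i) + (1/n)·(1 − 1/n)^{n−(i+1)}·g(S_i). -/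
/-- the per-step change of the distorted potential equals
`Ψ_i(S_i, e_i) + (1/n)(1-1/n)^{n-(i+1)} g(S_i)`. -/
theorem stmt_15 {Ω : Type*} [Fintype Ω] [DecidableEq Ω]
    (n : ℕ) (hn : n = Fintype.card Ω) (hn1 : 1 ≤ n)
    (i : ℕ) (hi : i ≤ n - 1)
    (g : Finset Ω → ℝ) (hg : ∀ A, 0 ≤ g A)
    (hsub : ∀ A B : Finset Ω, g A + g B ≥ g (A ∪ B) + g (A ∩ B))
    (ℓ : Ω → ℝ) (hℓ : ∀ e, 0 ≤ ℓ e)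
    (Si : Finset Ω) (ei : Ω) (hei : ei ∉ Si)
    (Si1 : Finset Ω)
    (hSi1 : Si1 =
      if 0 < (1 - 1 / (n : ℝ)) ^ (n - (i + 1)) * (g (insert ei Si) - g Si) - ℓ ei
      then insert ei Si else Si) :
    ((1 - 1 / (n : ℝ)) ^ (n - (i + 1)) * g Si1 - ∑ e ∈ Si1, ℓ e)
        - ((1 - 1 / (n : ℝ)) ^ (n - i) * g Si - ∑ e ∈ Si, ℓ e)
      = max 0 ((1 - 1 / (n : ℝ)) ^ (n - (i + 1)) * (g (insert ei Si) - g Si) - ℓ ei)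
        + (1 / (n : ℝ)) * (1 - 1 / (n : ℝ)) ^ (n - (i + 1)) * g Si := by
  have hstep : n - i = (n - (i + 1)) + 1 := by omega
  have hpow : (1 - 1 / (n : ℝ)) ^ (n - i)
      = (1 - 1 / (n : ℝ)) ^ (n - (i + 1)) * (1 - 1 / (n : ℝ)) := by
    rw [hstep, pow_succ]
  rw [hpow]
  by_cases h : 0 < (1 - 1 / (n : ℝ)) ^ (n - (i + 1)) * (g (insert ei Si) - g Si) - ℓ ei
  · rw [hSi1, if_pos h, Finset.sum_insert hei, max_eq_right h.le]
    ring
  · rw [hSi1, if_neg h, max_eq_left (not_lt.mp h)]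
    ring
end

section
/- Let g : 2^Ω → ℝ₊ be submodular, ℓ(A) = Σ_{e∈A} ℓ_e a nonnegative modular function, n = |Ω|, S ⊆ Ω, and 0 ≤ i ≤ n−1. Define Ψ_i(S,e) = max(0, (1 − 1/n)^{n−(i+1)} g(e|S) − ℓ_e). Then for any OPT ⊆ Ω, (1/n)·Σ_{e∈Ω} Ψ_i(S,e) ≥ (1/n)·(1 − 1/n)^{n−(i+1)}·(g(OPT ∪ S) − g(S)) − (1/n)·ℓ(OPT). -/
/-!
Every summand of the left-hand side is nonnegative, so dropping those outside `OPT` and then the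
truncation at `0` only decreases the sum. What remains is
`(1 − 1/n)^{n−(i+1)} · Σ_{e ∈ OPT} g(e|S) − ℓ(OPT)`, and submodularity bounds
the total marginal gain `Σ_{e ∈ OPT} g(e|S)` below by `g(OPT ∪ S) − g(S)`.
-/

open Finset

theorem sub_le_sum_marginal_of_submodular {Ω : Type*} [DecidableEq Ω] (g : Finset Ω → ℝ)
    (hsub : ∀ A B : Finset Ω, g A + g B ≥ g (A ∪ B) + g (A ∩ B)) (S A : Finset Ω) :
    g (A ∪ S) - g S ≤ ∑ e ∈ A, (g (insert e S) - g S) := by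
  induction A using Finset.induction with
  | empty => simp
  | insert a A haA ih =>
    have hunion : insert a S ∪ (A ∪ S) = insert a A ∪ S := by grind
    have hinter : insert a S ∩ (A ∪ S) = S := by grind
    have hstep := hsub (insert a S) (A ∪ S)
    rw [hunion, hinter] at hstep
    rw [sum_insert haA]
    linarith

theorem sum_le_univ_sum_max_zero {ι : Type*} [Fintype ι] (f : ι → ℝ) (s : Finset ι) :
    ∑ i ∈ s, f i ≤ ∑ i, max 0 (f i) :=
  (sum_le_sum fun i _ => le_max_right 0 (f i)).trans
    (sum_le_univ_sum_of_nonneg fun i => le_max_left 0 (f i))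

theorem stmt_16_general {Ω : Type*} [Fintype Ω] [DecidableEq Ω]
    (g : Finset Ω → ℝ)
    (hsub : ∀ A B : Finset Ω, g A + g B ≥ g (A ∪ B) + g (A ∩ B))
    (ℓ : Ω → ℝ)
    (n : ℕ)
    (S : Finset Ω) (i : ℕ)
    (OPT : Finset Ω) :
    (1 / (n : ℝ)) * ∑ e : Ω,
        max 0 ((1 - 1 / (n : ℝ)) ^ (n - (i + 1)) * (g (insert e S) - g S) - ℓ e)
      ≥ (1 / (n : ℝ)) * (1 - 1 / (n : ℝ)) ^ (n - (i + 1)) * (g (OPT ∪ S) - g S)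
        - (1 / (n : ℝ)) * ∑ e ∈ OPT, ℓ e := by
  set c : ℝ := (1 - 1 / (n : ℝ)) ^ (n - (i + 1))
  have hc : 0 ≤ c := pow_nonneg (Nat.one_sub_one_div_cast_nonneg n) _
  have hgain := mul_le_mul_of_nonneg_left (sub_le_sum_marginal_of_submodular g hsub S OPT) hc
  have htrunc := sum_le_univ_sum_max_zero (fun e => c * (g (insert e S) - g S) - ℓ e) OPT
  rw [sum_sub_distrib, ← mul_sum] at htrunc
  calc (1 / (n : ℝ)) * c * (g (OPT ∪ S) - g S) - (1 / (n : ℝ)) * ∑ e ∈ OPT, ℓ e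
      = (1 / (n : ℝ)) * (c * (g (OPT ∪ S) - g S) - ∑ e ∈ OPT, ℓ e) := by ring
    _ ≤ _ := mul_le_mul_of_nonneg_left (by linarith) (Nat.one_div_cast_nonneg n)

/-- lower bound on the average of the distorted truncated gains `Ψ_i(S,·)`. -/
theorem stmt_16 {Ω : Type*} [Fintype Ω] [DecidableEq Ω]
    (g : Finset Ω → ℝ) (hg : ∀ A, 0 ≤ g A)
    (hsub : ∀ A B : Finset Ω, g A + g B ≥ g (A ∪ B) + g (A ∩ B))
    (ℓ : Ω → ℝ) (hℓ : ∀ e, 0 ≤ ℓ e)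
    (n : ℕ) (hn : n = Fintype.card Ω)
    (S : Finset Ω) (i : ℕ) (hi : i ≤ n - 1) (hn1 : 1 ≤ n)
    (OPT : Finset Ω) :
    (1 / (n : ℝ)) * ∑ e : Ω,
        max 0 ((1 - 1 / (n : ℝ)) ^ (n - (i + 1)) * (g (insert e S) - g S) - ℓ e)
      ≥ (1 / (n : ℝ)) * (1 - 1 / (n : ℝ)) ^ (n - (i + 1)) * (g (OPT ∪ S) - g S)
        - (1 / (n : ℝ)) * ∑ e ∈ OPT, ℓ e :=
  stmt_16_general g hsub ℓ n S i OPT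
end
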